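/- arXiv:2103.01131 — 2 statements merged into one kernel-verified Lean document; each statement's English description precedes it below -/
import Mathlib

section
/- Fix an integer N ≥ 3 and reals δ, θ ∈ ℝ, and regard E_r and E_p as functions of the selection intensity β > 0 as well. Then lim_{β→0⁺} E_r(θ) = lim_{β→0⁺} E_p(θ) = N²·θ·H_N. -/
/-!
At `β = 0` the chain is neutral and every row of `1 - U` is `p_i` times the second difference
`F_i - (F_{i-1} + F_{i+1}) / 2`, so `𝒩` is an explicit multiple of the Green's function
`min a k * (N - max a k)` of the discrete Laplacian on `{0, …, N}` with zero boundary values.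
The entries of `U` are continuous in `β` and matrix inversion is continuous at invertible
matrices, so `E_r` and `E_p` tend to their values at `β = 0`. There
`n_{1,j} + n_{N-1,j} = 2N² / (j (N - j))`, and weighting by `j` or by `N - j` leaves
`2N²` times a harmonic sum.
-/

open Real Finset Filter Topology Matrix

/-- Transition matrix `U` between the transient states of the absorbing Markov chain,
for population size `N`, selection intensity `β`, payoff difference `δ` and incentive `θ`.
The index `i : Fin (N-1)` corresponds to the state with `i+1` cooperators;
`x = β(θ+δ)` and `p_i = i(N-i)/N²`. -/
noncomputable def Umat (N : ℕ) (β δ θ : ℝ) : Matrix (Fin (N - 1)) (Fin (N - 1)) ℝ :=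
  fun i j =>
    let x : ℝ := β * (θ + δ)
    let p : ℝ := ((i : ℕ) + 1 : ℝ) * ((N : ℝ) - ((i : ℕ) + 1 : ℝ)) / (N : ℝ) ^ 2
    if (j : ℕ) = (i : ℕ) + 1 then p / (1 + Real.exp (-x))
    else if (j : ℕ) + 1 = (i : ℕ) then p / (1 + Real.exp x)
    else if j = i then 1 - p / (1 + Real.exp (-x)) - p / (1 + Real.exp x)
    else 0

/-- The fundamental matrix `𝒩 = (I - U)⁻¹` of the absorbing Markov chain. -/
noncomputable def fund (N : ℕ) (β δ θ : ℝ) : Matrix (Fin (N - 1)) (Fin (N - 1)) ℝ :=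
  (1 - Umat N β δ θ)⁻¹

/-- Expected total cost of institutional reward,
`E_r(θ) = (θ/2) Σ_{i=1}^{N-1} (n_{1,i} + n_{N-1,i}) · i`
(row `1` is index `0` and row `N-1` is index `N-2`; junk value `0` for `N < 3`). -/
noncomputable def Ereward (N : ℕ) (β δ θ : ℝ) : ℝ :=
  if h : 3 ≤ N then
    (θ / 2) * ∑ j : Fin (N - 1),
      (fund N β δ θ ⟨0, by omega⟩ j + fund N β δ θ ⟨N - 2, by omega⟩ j) * ((j : ℕ) + 1 : ℝ)
  else 0

/-- Expected total cost of institutional punishment,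
`E_p(θ) = (θ/2) Σ_{i=1}^{N-1} (n_{1,i} + n_{N-1,i}) · (N - i)`. -/
noncomputable def Epunish (N : ℕ) (β δ θ : ℝ) : ℝ :=
  if h : 3 ≤ N then
    (θ / 2) * ∑ j : Fin (N - 1),
      (fund N β δ θ ⟨0, by omega⟩ j + fund N β δ θ ⟨N - 2, by omega⟩ j)
        * ((N : ℝ) - ((j : ℕ) + 1 : ℝ))
  else 0

/-- Harmonic number `H_N = Σ_{j=1}^{N-1} 1/j`. -/
noncomputable def harmonicNum (N : ℕ) : ℝ := ∑ j ∈ Finset.range (N - 1), (1 : ℝ) / ((j : ℕ) + 1)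

noncomputable def green (N k a : ℕ) : ℝ :=
  if a ≤ k then a * ((N : ℝ) - k) else k * ((N : ℝ) - a)

lemma green_zero_right (N k : ℕ) : green N k 0 = 0 := by
  simp [green]

lemma green_self_right {N k : ℕ} (hk : k ≤ N) : green N k N = 0 := by
  unfold green
  split_ifs with h
  · rw [show k = N by omega]; ring
  · ring

lemma green_one_right {N k : ℕ} (hk : 1 ≤ k) : green N k 1 = N - k := by
  simp [green, hk]

lemma green_of_add_one_eq {N k a : ℕ} (ha : a + 1 = N) (hk : k ≤ a) : green N k a = k := by
  have hN : (N : ℝ) = a + 1 := by exact_mod_cast ha.symm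
  unfold green
  split_ifs with h
  · rw [show k = a by omega, hN]; ring
  · rw [hN]; ring

lemma green_second_difference (N k a : ℕ) :
    2 * green N k (a + 1) - green N k a - green N k (a + 2) = if a + 1 = k then (N : ℝ) else 0 := by
  unfold green
  rcases lt_trichotomy k (a + 1) with hk | rfl | hk
  · simp only [show ¬a + 1 ≤ k by omega, show ¬a + 2 ≤ k by omega, show a + 1 ≠ k by omega,
      if_false]
    split_ifs with ha
    · obtain rfl : k = a := by omega
      push_cast; ring
    · push_cast; ring
  · simp only [le_refl, Nat.le_succ, show ¬a + 2 ≤ a + 1 by omega, if_true, if_false]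
    push_cast; ring
  · simp only [show a + 1 ≤ k by omega, show a ≤ k by omega, show a + 2 ≤ k by omega,
      show a + 1 ≠ k by omega, if_true, if_false]
    push_cast; ring

/-- Extending `F` by zero at the absorbing states `0` and `N` makes the two boundary rows
behave like the interior ones. -/
lemma sum_one_sub_Umat_mul (N : ℕ) (β δ θ : ℝ) (F : ℕ → ℝ) (hF0 : F 0 = 0) (hFN : F N = 0)
    (i : Fin (N - 1)) :
    ∑ j, (1 - Umat N β δ θ) i j * F (j + 1) =
      ((i : ℕ) + 1 : ℝ) * ((N : ℝ) - ((i : ℕ) + 1 : ℝ)) / (N : ℝ) ^ 2 *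
        ((F (i + 1) - F (i + 2)) / (1 + exp (-(β * (θ + δ))))
          + (F (i + 1) - F i) / (1 + exp (β * (θ + δ)))) := by
  set p : ℝ := ((i : ℕ) + 1 : ℝ) * ((N : ℝ) - ((i : ℕ) + 1 : ℝ)) / (N : ℝ) ^ 2
  set up : ℝ := p / (1 + exp (-(β * (θ + δ))))
  set down : ℝ := p / (1 + exp (β * (θ + δ)))
  have hi := i.isLt
  let g : ℕ → ℝ := fun n =>
    (if n = i then (up + down) * F (i + 1) else 0) + (if n = i + 1 then -up * F (i + 2) else 0)
      + (if n = i - 1 then -down * F i else 0)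
  have hsummand : ∀ j : Fin (N - 1), (1 - Umat N β δ θ) i j * F (j + 1) = g j := by
    intro j
    simp only [g, up, down, p, Matrix.sub_apply, Matrix.one_apply, Umat, Fin.ext_iff]
    split_ifs <;> first | (exfalso; omega) | skip
    · obtain ⟨hj, hi0⟩ : (j : ℕ) = i ∧ (i : ℕ) = 0 := by omega
      rw [hj, hi0, hF0]; ring
    · rw [show (j : ℕ) = i by omega]; ring
    · rw [show (j : ℕ) + 1 = i + 2 by omega]; ring
    · rw [show (j : ℕ) + 1 = i by omega]; ring
    · ring
  rw [Finset.sum_congr rfl fun j _ => hsummand j, Fin.sum_univ_eq_sum_range g]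
  simp only [g, Finset.sum_add_distrib, Finset.sum_ite_eq', Finset.mem_range]
  rw [if_pos hi, if_pos (by omega : (i : ℕ) - 1 < N - 1)]
  have hup : (if (i : ℕ) + 1 < N - 1 then -up * F (i + 2) else 0) = -up * F (i + 2) := by
    split_ifs
    · rfl
    · rw [show (i : ℕ) + 2 = N by omega, hFN, mul_zero]
  rw [hup]
  simp only [up, down]
  ring

/-- Row `i` and column `k` stand for the states `i + 1` and `k + 1`; column `k` is the solution
of `p_a (F a - (F (a - 1) + F (a + 1)) / 2) = [a = k + 1]` vanishing at `0` and `N`. -/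
noncomputable def fundZero (N : ℕ) : Matrix (Fin (N - 1)) (Fin (N - 1)) ℝ :=
  fun i k => 2 * N / (((k : ℕ) + 1 : ℝ) * ((N : ℝ) - ((k : ℕ) + 1 : ℝ))) * green N (k + 1) (i + 1)

lemma one_sub_Umat_zero_mul_fundZero (N : ℕ) (δ θ : ℝ) : (1 - Umat N 0 δ θ) * fundZero N = 1 := by
  ext i k
  set c : ℝ := 2 * N / (((k : ℕ) + 1 : ℝ) * ((N : ℝ) - ((k : ℕ) + 1 : ℝ)))
  set p : ℝ := ((i : ℕ) + 1 : ℝ) * ((N : ℝ) - ((i : ℕ) + 1 : ℝ)) / (N : ℝ) ^ 2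
  have hk := k.isLt
  have hF0 : c * green N (k + 1) 0 = 0 := by rw [green_zero_right, mul_zero]
  have hFN : c * green N (k + 1) N = 0 := by rw [green_self_right (by omega), mul_zero]
  rw [Matrix.mul_apply, Matrix.one_apply]
  refine (sum_one_sub_Umat_mul N 0 δ θ (fun a => c * green N (k + 1) a) hF0 hFN i).trans ?_
  simp only [zero_mul, neg_zero, exp_zero]
  have hd := green_second_difference N (k + 1) i
  split_ifs with hik
  · subst hik
    have hkN : ((i : ℕ) : ℝ) + 1 < N := by exact_mod_cast (by omega : (i : ℕ) + 1 < N)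
    have hkN' : (N : ℝ) - ((i : ℕ) + 1) ≠ 0 := by linarith
    have hN : (N : ℝ) ≠ 0 := by linarith
    have hpc : p * c / 2 * N = 1 := by
      simp only [p, c]
      field_simp
    rw [if_pos rfl] at hd
    linear_combination p * c / 2 * hd + hpc
  · rw [if_neg (by omega)] at hd
    linear_combination p * c / 2 * hd

lemma fund_zero (N : ℕ) (δ θ : ℝ) : fund N 0 δ θ = fundZero N :=
  Matrix.inv_eq_right_inv (one_sub_Umat_zero_mul_fundZero N δ θ)

lemma continuous_Umat (N : ℕ) (δ θ : ℝ) : Continuous fun β => Umat N β δ θ := by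
  refine continuous_matrix fun i j => ?_
  simp only [Umat]
  split_ifs <;> fun_prop (disch := intro; positivity)

lemma tendsto_fund_zero (N : ℕ) (δ θ : ℝ) :
    Tendsto (fun β => fund N β δ θ) (𝓝 0) (𝓝 (fundZero N)) := by
  have hdet := det_ne_zero_of_right_inverse (one_sub_Umat_zero_mul_fundZero N δ θ)
  have hinv : ContinuousAt Inv.inv (1 - Umat N 0 δ θ) :=
    continuousAt_matrix_inv _ (by rw [Ring.inverse_eq_inv']; exact continuousAt_inv₀ hdet)
  rw [← fund_zero N δ θ]
  exact hinv.tendsto.comp (continuous_const.sub (continuous_Umat N δ θ)).continuousAt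

lemma fundZero_first_add_last (N : ℕ) (hN : 3 ≤ N) (j : Fin (N - 1)) :
    fundZero N ⟨0, by omega⟩ j + fundZero N ⟨N - 2, by omega⟩ j =
      2 * N ^ 2 / (((j : ℕ) + 1 : ℝ) * ((N : ℝ) - ((j : ℕ) + 1 : ℝ))) := by
  have hj := j.isLt
  simp only [fundZero]
  rw [← mul_add, green_one_right (by omega), green_of_add_one_eq (by omega) (by omega)]
  push_cast
  ring

noncomputable def incentiveCost (N : ℕ) (hN : 3 ≤ N) (θ : ℝ) (w : Fin (N - 1) → ℝ)
    (M : Matrix (Fin (N - 1)) (Fin (N - 1)) ℝ) : ℝ :=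
  θ / 2 * ∑ j, (M ⟨0, by omega⟩ j + M ⟨N - 2, by omega⟩ j) * w j

lemma Ereward_eq_incentiveCost (N : ℕ) (hN : 3 ≤ N) (β δ θ : ℝ) :
    Ereward N β δ θ = incentiveCost N hN θ (fun j => (j : ℕ) + 1) (fund N β δ θ) :=
  dif_pos hN

lemma Epunish_eq_incentiveCost (N : ℕ) (hN : 3 ≤ N) (β δ θ : ℝ) :
    Epunish N β δ θ = incentiveCost N hN θ (fun j => N - ((j : ℕ) + 1 : ℝ)) (fund N β δ θ) :=
  dif_pos hN

lemma continuous_incentiveCost (N : ℕ) (hN : 3 ≤ N) (θ : ℝ) (w : Fin (N - 1) → ℝ) :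
    Continuous (incentiveCost N hN θ w) := by
  unfold incentiveCost
  fun_prop

lemma incentiveCost_fundZero (N : ℕ) (hN : 3 ≤ N) (θ : ℝ) (w : Fin (N - 1) → ℝ) :
    incentiveCost N hN θ w (fundZero N) =
      N ^ 2 * θ * ∑ j, w j / (((j : ℕ) + 1 : ℝ) * ((N : ℝ) - ((j : ℕ) + 1 : ℝ))) := by
  simp only [incentiveCost, fundZero_first_add_last N hN, Finset.mul_sum]
  refine Finset.sum_congr rfl fun j _ => ?_
  ring

lemma harmonicNum_eq_sum_fin (N : ℕ) : harmonicNum N = ∑ j : Fin (N - 1), 1 / ((j : ℕ) + 1 : ℝ) :=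
  (Fin.sum_univ_eq_sum_range (fun j => 1 / ((j : ℝ) + 1)) (N - 1)).symm

lemma harmonicNum_eq_sum_fin_rev (N : ℕ) :
    harmonicNum N = ∑ j : Fin (N - 1), 1 / ((N : ℝ) - ((j : ℕ) + 1 : ℝ)) := by
  rw [harmonicNum_eq_sum_fin, ← Fintype.sum_equiv Fin.revPerm _ _ fun _ => rfl]
  refine Finset.sum_congr rfl fun j _ => ?_
  have hj := j.isLt
  rw [Fin.revPerm_apply, Fin.val_rev, Nat.cast_sub (by omega), Nat.cast_sub (by omega : 1 ≤ N)]
  push_cast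
  ring

lemma sum_div_sub_succ_eq_harmonicNum (N : ℕ) :
    ∑ j : Fin (N - 1), ((j : ℕ) + 1 : ℝ) / (((j : ℕ) + 1 : ℝ) * ((N : ℝ) - ((j : ℕ) + 1 : ℝ))) =
      harmonicNum N := by
  rw [harmonicNum_eq_sum_fin_rev]
  refine Finset.sum_congr rfl fun j _ => ?_
  rw [div_mul_cancel_left₀ (by positivity), one_div]

lemma sum_div_succ_eq_harmonicNum (N : ℕ) :
    ∑ j : Fin (N - 1),
        ((N : ℝ) - ((j : ℕ) + 1 : ℝ)) / (((j : ℕ) + 1 : ℝ) * ((N : ℝ) - ((j : ℕ) + 1 : ℝ))) =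
      harmonicNum N := by
  rw [harmonicNum_eq_sum_fin]
  refine Finset.sum_congr rfl fun j _ => ?_
  have hj := j.isLt
  have hjN : ((j : ℕ) : ℝ) + 1 < N := by exact_mod_cast (by omega : (j : ℕ) + 1 < N)
  rw [div_mul_cancel_right₀ (by linarith), one_div]

/-- For fixed N ≥ 3 and δ, θ ∈ ℝ, regarding E_r and E_p as functions of the
selection intensity β > 0, lim_{β→0⁺} E_r(θ) = lim_{β→0⁺} E_p(θ) = N²·θ·H_N. -/
theorem weak_selection_limit (N : ℕ) (hN : 3 ≤ N) (δ θ : ℝ) :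
    Tendsto (fun β : ℝ => Ereward N β δ θ) (𝓝[>] 0)
      (𝓝 ((N : ℝ) ^ 2 * θ * harmonicNum N)) ∧
    Tendsto (fun β : ℝ => Epunish N β δ θ) (𝓝[>] 0)
      (𝓝 ((N : ℝ) ^ 2 * θ * harmonicNum N)) := by
  have hcost : ∀ w, Tendsto (fun β => incentiveCost N hN θ w (fund N β δ θ)) (𝓝[>] 0)
      (𝓝 (incentiveCost N hN θ w (fundZero N))) := fun w =>
    ((continuous_incentiveCost N hN θ w).tendsto _).comp
      ((tendsto_fund_zero N δ θ).mono_left nhdsWithin_le_nhds)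
  constructor
  · simpa only [Ereward_eq_incentiveCost N hN, incentiveCost_fundZero,
      sum_div_sub_succ_eq_harmonicNum] using hcost fun j => (j : ℕ) + 1
  · simpa only [Epunish_eq_incentiveCost N hN, incentiveCost_fundZero,
      sum_div_succ_eq_harmonicNum] using hcost fun j => N - ((j : ℕ) + 1 : ℝ)
end

section
/- Consider the N = 3 institutional reward cost E_r as a function of θ ∈ ℝ, for fixed β > 0 and δ ∈ ℝ. If −βδ > F*, then the equation F(u) = −βδ has exactly two solutions u_1 < u_2 in {u > 0 : P(u) > 0}, both greater than (1+√21)/4, and for every θ ∈ ℝ with u = e^{β(θ+δ)}: E_r'(θ) > 0 if u < u_1, E_r'(θ) < 0 if u_1 < u < u_2, and E_r'(θ) > 0 if u > u_2; hence E_r is increasing for θ < θ_1, decreasing for θ_1 < θ < θ_2 and increasing for θ > θ_2, where θ_k = (log u_k)/β − δ. -/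
open Real Finset Filter Topology Matrix

/-- Auxiliary polynomial for the N = 3 institutional reward case: `P(u) = 4u² − 2u − 5`
(whose unique positive root is `(1+√21)/4`). -/
noncomputable def Pfun (u : ℝ) : ℝ := 4 * u ^ 2 - 2 * u - 5

/-- Auxiliary function for the N = 3 institutional reward case:
`F(u) = (u+1)(5u+4)(u²+u+1)/(u(4u²−2u−5)) − log u`. -/
noncomputable def Ffun (u : ℝ) : ℝ :=
  (u + 1) * (5 * u + 4) * (u ^ 2 + u + 1) / (u * (4 * u ^ 2 - 2 * u - 5)) - Real.log u

/-- `F* = inf {F(u) : u > 0, P(u) > 0}`. -/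
noncomputable def Fstar : ℝ := sInf {y : ℝ | ∃ u : ℝ, 0 < u ∧ 0 < Pfun u ∧ y = Ffun u}

/-!
For `N = 3` the fundamental matrix is explicit and `E_r(θ) = (9θ/4) g(u)` with
`g(u) = (u+1)(5u+4)/(u²+u+1)` and `u = e^{β(θ+δ)}`. Since `g' = -P/(u²+u+1)²` and
`βθ = log u + c` with `c = -βδ`, the derivative `E_r'(θ)` has the sign of
`Q(u) - (log u + c) u P(u)`, where `Q(u) = (u+1)(5u+4)(u²+u+1)`. Where `P(u) > 0` this equals
`(F(u) - c) u P(u)`; where `P(u) ≤ 0` it is positive because `u (-log u) ≤ 1/e` is small.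
On `u > (1+√21)/4`, `F'` has the sign of a sextic which changes sign once, at some `m ∈ (4, 9/2)`,
so `F` is a valley blowing up at both ends, and a level `c` above `F*` is crossed exactly twice.
-/

theorem exists_two_crossings_of_valley {f : ℝ → ℝ} {r a m b c : ℝ}
    (hf : ContinuousOn f (Set.Ioi r)) (hanti : StrictAntiOn f (Set.Ioc r m))
    (hmono : StrictMonoOn f (Set.Ici m)) (hra : r < a) (ham : a ≤ m) (hmb : m ≤ b)
    (hfa : c < f a) (hfm : f m < c) (hfb : c < f b) :
    ∃ u1 u2, r < u1 ∧ u1 < u2 ∧ f u1 = c ∧ f u2 = c ∧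
      (∀ u, r < u → f u = c → u = u1 ∨ u = u2) ∧
      (∀ u, r < u → u < u1 → c < f u) ∧ (∀ u, u1 < u → u < u2 → f u < c) ∧
      (∀ u, u2 < u → c < f u) := by
  obtain ⟨u1, ⟨hau1, hu1m⟩, hu1⟩ := intermediate_value_Icc' ham
    (hf.mono fun x hx => hra.trans_le hx.1) ⟨hfm.le, hfa.le⟩
  obtain ⟨u2, ⟨hmu2, -⟩, hu2⟩ := intermediate_value_Icc hmb
    (hf.mono fun x hx => (hra.trans_le (ham.trans hx.1))) ⟨hfm.le, hfb.le⟩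
  have hu1m' : u1 < m := lt_of_le_of_ne hu1m (by rintro rfl; linarith)
  have hmu2' : m < u2 := lt_of_le_of_ne hmu2 (by rintro rfl; linarith)
  have hru1 : r < u1 := hra.trans_le hau1
  have hbelow : ∀ u, r < u → u < u1 → c < f u := fun u hru huu1 =>
    hu1 ▸ hanti ⟨hru, by linarith⟩ ⟨hru1, hu1m⟩ huu1
  have hbetween : ∀ u, u1 < u → u < u2 → f u < c := fun u hu1u huu2 => by
    rcases le_or_gt u m with hum | hmu
    · exact hu1 ▸ hanti ⟨hru1, hu1m⟩ ⟨hru1.trans hu1u, hum⟩ hu1u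
    · exact hu2 ▸ hmono (Set.mem_Ici.2 hmu.le) (Set.mem_Ici.2 hmu2) huu2
  have habove : ∀ u, u2 < u → c < f u := fun u hu2u =>
    hu2 ▸ hmono (Set.mem_Ici.2 hmu2) (Set.mem_Ici.2 (by linarith)) hu2u
  refine ⟨u1, u2, hru1, hu1m'.trans hmu2', hu1, hu2, fun u hru hfu => ?_, hbelow, hbetween, habove⟩
  rcases lt_trichotomy u u1 with h1 | rfl | h1
  · exact absurd hfu (hbelow u hru h1).ne'
  · exact .inl rfl
  rcases lt_trichotomy u u2 with h2 | rfl | h2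
  · exact absurd hfu (hbetween u h1 h2).ne
  · exact .inr rfl
  · exact absurd hfu (habove u h2).ne'

noncomputable def Qfun (u : ℝ) : ℝ := (u + 1) * (5 * u + 4) * (u ^ 2 + u + 1)

noncomputable def derivNum (c u : ℝ) : ℝ := Qfun u - (log u + c) * u * Pfun u

lemma Ffun_eq (u : ℝ) : Ffun u = Qfun u / (u * Pfun u) - log u := rfl

noncomputable def fundThree (u : ℝ) : Matrix (Fin 2) (Fin 2) ℝ :=
  (9 / (2 * (u ^ 2 + u + 1))) • !![(1 + u) ^ 2, (1 + u) * u; 1 + u, (1 + u) ^ 2]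

noncomputable def rewardGain (u : ℝ) : ℝ := (u + 1) * (5 * u + 4) / (u ^ 2 + u + 1)

lemma fund_three (β δ θ : ℝ) : fund 3 β δ θ = fundThree (exp (β * (θ + δ))) := by
  have hS : exp (β * (θ + δ)) ^ 2 + exp (β * (θ + δ)) + 1 ≠ 0 := by positivity
  refine Matrix.inv_eq_right_inv ?_
  ext i j
  fin_cases i <;> fin_cases j <;>
    simp [Matrix.mul_apply, Umat, fundThree, Matrix.one_apply, Real.exp_neg] <;> field_simp <;> ring

lemma Ereward_three (β δ θ : ℝ) : Ereward 3 β δ θ = 9 * θ / 4 * rewardGain (exp (β * (θ + δ))) := by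
  have hS : exp (β * (θ + δ)) ^ 2 + exp (β * (θ + δ)) + 1 ≠ 0 := by positivity
  simp [Ereward, fund_three, fundThree, rewardGain, Fin.sum_univ_two]
  field_simp
  ring

lemma hasDerivAt_rewardGain (u : ℝ) :
    HasDerivAt rewardGain (-Pfun u / (u ^ 2 + u + 1) ^ 2) u := by
  have hS : u ^ 2 + u + 1 ≠ 0 := by nlinarith [sq_nonneg (u + 1 / 2)]
  have h : HasDerivAt (fun v => (v + 1) * (5 * v + 4) / (v ^ 2 + v + 1)) _ u :=
    (((hasDerivAt_id' u).add_const 1).mul (((hasDerivAt_id' u).const_mul 5).add_const 4)).div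
      (((hasDerivAt_pow 2 u).add (hasDerivAt_id' u)).add_const 1) hS
  refine h.congr_deriv ?_
  simp only [Pfun, Pi.mul_apply]
  field_simp
  ring

lemma hasDerivAt_Ereward_three (β δ θ : ℝ) :
    HasDerivAt (fun t => Ereward 3 β δ t)
      (9 / (4 * (exp (β * (θ + δ)) ^ 2 + exp (β * (θ + δ)) + 1) ^ 2) *
        derivNum (-β * δ) (exp (β * (θ + δ)))) θ := by
  have hx : HasDerivAt (fun t => β * (t + δ)) β θ := by
    simpa using ((hasDerivAt_id θ).add_const δ).const_mul β
  have h := (((hasDerivAt_id' θ).const_mul 9).div_const 4).mul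
      ((hasDerivAt_rewardGain _).comp θ hx.exp)
  refine (h.congr_of_eventuallyEq (.of_forall fun t => Ereward_three β δ t)).congr_deriv ?_
  have hS : exp (β * (θ + δ)) ^ 2 + exp (β * (θ + δ)) + 1 ≠ 0 := by positivity
  simp only [derivNum, Qfun, rewardGain, Function.comp_apply, log_exp]
  field_simp
  ring

local notation "ρ" => (1 + √21) / 4

lemma root_bounds : 27 / 20 < ρ ∧ ρ < 7 / 5 := by
  have h21 : √21 ^ 2 = 21 := sq_sqrt (by norm_num)
  have h0 : 0 ≤ √21 := sqrt_nonneg _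
  constructor <;> nlinarith

lemma Pfun_eq_mul (u : ℝ) : Pfun u = 4 * (u - ρ) * (u - (1 - √21) / 4) := by
  have h21 : √21 ^ 2 = 21 := sq_sqrt (by norm_num)
  unfold Pfun
  linear_combination h21 / 4

lemma Pfun_pos_iff {u : ℝ} (hu : 0 < u) : 0 < Pfun u ↔ ρ < u := by
  have hρ' : 0 < u - (1 - √21) / 4 := by linarith [root_bounds.1]
  rw [Pfun_eq_mul, mul_pos_iff_of_pos_right hρ']
  constructor <;> intro h <;> linarith

lemma derivNum_eq_mul {c u : ℝ} (hu : u ≠ 0) (hP : Pfun u ≠ 0) :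
    derivNum c u = (Ffun u - c) * (u * Pfun u) := by
  rw [derivNum, Ffun_eq]
  field_simp
  ring

lemma derivNum_pos_of_Pfun_nonpos {c u : ℝ} (hc : 0 ≤ c) (hu : 0 < u) (hP : Pfun u ≤ 0) :
    0 < derivNum c u := by
  have hQ : 4 < Qfun u := by unfold Qfun; nlinarith [pow_pos hu 3, pow_pos hu 4]
  have hP' : -Pfun u ≤ 21 / 4 := by unfold Pfun; nlinarith [sq_nonneg (u - 1 / 4)]
  -- `y e^{-y} ≤ e^{-1} < 1/2` at `y = -log u`
  have hlog : u * -log u < 1 / 2 := by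
    have h := mul_exp_neg_le_exp_neg_one (-log u)
    rw [neg_neg, exp_log hu] at h
    have he : exp (-1) < 1 / 2 := by
      rw [Real.exp_neg, inv_lt_comm₀ (exp_pos 1) (by norm_num)]
      linarith [add_one_lt_exp (one_ne_zero (α := ℝ))]
    linarith
  rcases le_or_gt 0 (log u + c) with hl | hl
  · unfold derivNum; nlinarith [mul_nonneg hl hu.le]
  · have : (log u + c) * u * Pfun u ≤ u * -log u * -Pfun u :=
      calc (log u + c) * u * Pfun u = (u * -(log u + c)) * -Pfun u := by ring
        _ ≤ (u * -log u) * -Pfun u := by gcongr <;> linarith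
    unfold derivNum
    nlinarith [mul_le_mul_of_nonneg_left hP' (by nlinarith : 0 ≤ u * -log u)]

lemma quarter_add_one_lt_Ffun {u : ℝ} (hu : ρ < u) : u / 4 + 1 < Ffun u := by
  have hu0 : 0 < u := by linarith [root_bounds.1]
  have hP : 0 < Pfun u := (Pfun_pos_iff hu0).2 hu
  have hlog : log u < u - 1 := log_lt_sub_one_of_pos hu0 (by linarith [root_bounds.1])
  have hQ : 5 * u / 4 < Qfun u / (u * Pfun u) := by
    rw [lt_div_iff₀ (by positivity)]
    unfold Qfun Pfun at *
    nlinarith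
  rw [Ffun_eq]
  linarith

lemma inv_sub_one_lt_Ffun {u : ℝ} (hu : ρ < u) (hu2 : u < 2) : 1 / (8 * (u - ρ)) - 1 < Ffun u := by
  have hρ := root_bounds
  have hu0 : 0 < u := by linarith
  have hlog : log u < 1 := by linarith [log_lt_sub_one_of_pos hu0 (by linarith)]
  have huP : u * Pfun u ≤ 32 * (u - ρ) := by
    have h21 : √21 < 5 := by rw [sqrt_lt' (by norm_num)]; norm_num
    rw [Pfun_eq_mul]
    have : u * (u - (1 - √21) / 4) ≤ 8 := by nlinarith
    nlinarith
  have hQ : 1 / (8 * (u - ρ)) < Qfun u / (u * Pfun u) := by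
    have hP : 0 < u * Pfun u := mul_pos hu0 ((Pfun_pos_iff hu0).2 hu)
    rw [div_lt_div_iff₀ (by linarith) hP]
    unfold Qfun
    nlinarith [pow_pos hu0 3, pow_pos hu0 4]
  rw [Ffun_eq]
  linarith

noncomputable def FderivNum (u : ℝ) : ℝ :=
  20 * u ^ 6 - 36 * u ^ 5 - 159 * u ^ 4 - 208 * u ^ 3 - 132 * u ^ 2 - 9 * u + 20

lemma hasDerivAt_Ffun {u : ℝ} (hu : u ≠ 0) (hP : Pfun u ≠ 0) :
    HasDerivAt Ffun (FderivNum u / (u * Pfun u) ^ 2) u := by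
  have huP : u * Pfun u ≠ 0 := mul_ne_zero hu hP
  have hQ : HasDerivAt (fun v => (v + 1) * (5 * v + 4) * (v ^ 2 + v + 1)) _ u :=
    ((((hasDerivAt_id' u).add_const 1).mul (((hasDerivAt_id' u).const_mul 5).add_const 4)).mul
      (((hasDerivAt_pow 2 u).add (hasDerivAt_id' u)).add_const 1))
  have hD : HasDerivAt (fun v => v * (4 * v ^ 2 - 2 * v - 5)) _ u :=
    (hasDerivAt_id' u).mul ((((hasDerivAt_pow 2 u).const_mul 4).sub
      ((hasDerivAt_id' u).const_mul 2)).sub_const 5)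
  refine ((hQ.div hD huP).sub (hasDerivAt_log hu)).congr_deriv ?_
  simp only [Pfun, Pi.mul_apply] at hP ⊢
  have hP' : u * (u * 4 - 2) - 5 ≠ 0 := fun h => hP (by linear_combination h)
  unfold FderivNum
  field_simp
  ring

lemma hasDerivAt_FderivNum (x : ℝ) :
    HasDerivAt FderivNum (120 * x ^ 5 - 180 * x ^ 4 - 636 * x ^ 3 - 624 * x ^ 2 - 264 * x - 9) x := by
  have h := ((((((((hasDerivAt_pow 6 x).const_mul 20).sub ((hasDerivAt_pow 5 x).const_mul 36)).sub
    ((hasDerivAt_pow 4 x).const_mul 159)).sub ((hasDerivAt_pow 3 x).const_mul 208)).sub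
    ((hasDerivAt_pow 2 x).const_mul 132)).sub ((hasDerivAt_id' x).const_mul 9)).add_const 20)
  exact h.congr_deriv (by push_cast; ring)

lemma FderivNum_strictMonoOn : StrictMonoOn FderivNum (Set.Ici 4) := by
  refine strictMonoOn_of_deriv_pos (convex_Ici 4)
    (fun x _ => (hasDerivAt_FderivNum x).continuousAt.continuousWithinAt) fun x hx => ?_
  rw [interior_Ici, Set.mem_Ioi] at hx
  rw [(hasDerivAt_FderivNum x).deriv]
  have h0 : 0 ≤ x - 4 := by linarith
  nlinarith [pow_pos (by linarith : (0:ℝ) < x) 4, pow_pos (by linarith : (0:ℝ) < x) 3,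
    mul_nonneg h0 (pow_nonneg h0 4), mul_nonneg h0 (pow_pos (by linarith : (0:ℝ) < x) 3).le]

lemma FderivNum_neg {x : ℝ} (h1 : 27 / 20 ≤ x) (h2 : x ≤ 4) : FderivNum x < 0 := by
  have h := mul_nonneg (sub_nonneg.2 h1) (sub_nonneg.2 h2)
  have hx : 0 ≤ x := by linarith
  unfold FderivNum
  nlinarith [mul_nonneg h (sq_nonneg x), mul_nonneg h (pow_nonneg hx 4),
    mul_nonneg h (pow_nonneg hx 3), mul_nonneg h hx]

lemma exists_FderivNum_eq_zero : ∃ m, 4 < m ∧ m < 9 / 2 ∧ FderivNum m = 0 := by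
  have h4 : FderivNum 4 < 0 := by norm_num [FderivNum]
  have h9 : 0 < FderivNum (9 / 2) := by norm_num [FderivNum]
  obtain ⟨m, hm, hm0⟩ := intermediate_value_Ioo (by norm_num : (4:ℝ) ≤ 9 / 2)
    (fun x _ => (hasDerivAt_FderivNum x).continuousAt.continuousWithinAt) ⟨h4, h9⟩
  exact ⟨m, hm.1, hm.2, hm0⟩

lemma mul_Pfun_pos_of_root_lt {x : ℝ} (hx : ρ < x) : 0 < x * Pfun x := by
  have hx0 : 0 < x := by linarith [root_bounds.1]
  exact mul_pos hx0 ((Pfun_pos_iff hx0).2 hx)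

lemma hasDerivAt_Ffun_of_root_lt {x : ℝ} (hx : ρ < x) :
    HasDerivAt Ffun (FderivNum x / (x * Pfun x) ^ 2) x := by
  have h := mul_Pfun_pos_of_root_lt hx
  exact hasDerivAt_Ffun (left_ne_zero_of_mul h.ne') (right_ne_zero_of_mul h.ne')

lemma continuousOn_Ffun : ContinuousOn Ffun (Set.Ioi ρ) :=
  fun _ hx => (hasDerivAt_Ffun_of_root_lt hx).continuousAt.continuousWithinAt

lemma Ffun_strictAntiOn {m : ℝ} (hm : 4 < m) (hmN : FderivNum m = 0) :
    StrictAntiOn Ffun (Set.Ioc ρ m) := by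
  refine strictAntiOn_of_deriv_neg (convex_Ioc _ _)
    (continuousOn_Ffun.mono Set.Ioc_subset_Ioi_self) fun x hx => ?_
  rw [interior_Ioc] at hx
  rw [(hasDerivAt_Ffun_of_root_lt hx.1).deriv]
  refine div_neg_of_neg_of_pos ?_ (pow_pos (mul_Pfun_pos_of_root_lt hx.1) 2)
  rcases le_or_gt x 4 with h4 | h4
  · exact FderivNum_neg (by linarith [root_bounds.1, hx.1]) h4
  · simpa [hmN] using FderivNum_strictMonoOn (Set.mem_Ici.2 h4.le) (Set.mem_Ici.2 hm.le) hx.2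

lemma Ffun_strictMonoOn {m : ℝ} (hm : 4 < m) (hmN : FderivNum m = 0) :
    StrictMonoOn Ffun (Set.Ici m) := by
  have hρm : ρ < m := by linarith [root_bounds.2]
  refine strictMonoOn_of_deriv_pos (convex_Ici _)
    (continuousOn_Ffun.mono fun x hx => hρm.trans_le hx) fun x hx => ?_
  rw [interior_Ici, Set.mem_Ioi] at hx
  rw [(hasDerivAt_Ffun_of_root_lt (hρm.trans hx)).deriv]
  refine div_pos ?_ (pow_pos (mul_Pfun_pos_of_root_lt (hρm.trans hx)) 2)
  simpa [hmN] using FderivNum_strictMonoOn (Set.mem_Ici.2 hm.le) (Set.mem_Ici.2 (by linarith)) hx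

lemma Fstar_set_nonempty : {y : ℝ | ∃ u : ℝ, 0 < u ∧ 0 < Pfun u ∧ y = Ffun u}.Nonempty :=
  ⟨Ffun 2, 2, by norm_num, by norm_num [Pfun], rfl⟩

lemma one_le_Fstar : 1 ≤ Fstar := by
  refine le_csInf Fstar_set_nonempty ?_
  rintro _ ⟨u, hu, hP, rfl⟩
  linarith [quarter_add_one_lt_Ffun ((Pfun_pos_iff hu).1 hP)]

lemma Ffun_level_set {c : ℝ} (hc : Fstar < c) :
    ∃ u1 u2, ρ < u1 ∧ u1 < u2 ∧ Ffun u1 = c ∧ Ffun u2 = c ∧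
      (∀ u, ρ < u → Ffun u = c → u = u1 ∨ u = u2) ∧
      (∀ u, ρ < u → u < u1 → c < Ffun u) ∧ (∀ u, u1 < u → u < u2 → Ffun u < c) ∧
      (∀ u, u2 < u → c < Ffun u) := by
  have hρ := root_bounds
  have hc1 : 1 < c := one_le_Fstar.trans_lt hc
  obtain ⟨m, hm4, hm9, hmN⟩ := exists_FderivNum_eq_zero
  have hanti := Ffun_strictAntiOn hm4 hmN
  have hmono := Ffun_strictMonoOn hm4 hmN
  have hFm : Ffun m < c := by
    obtain ⟨_, ⟨u, hu, hP, rfl⟩, hFu⟩ := exists_lt_of_csInf_lt Fstar_set_nonempty hc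
    have hρu := (Pfun_pos_iff hu).1 hP
    rcases le_or_gt u m with hum | hmu
    · exact (hanti.antitoneOn ⟨hρu, hum⟩ ⟨by linarith, le_rfl⟩ hum).trans_lt hFu
    · exact (hmono (Set.mem_Ici.2 le_rfl) (Set.mem_Ici.2 hmu.le) hmu).trans hFu
  set a := ρ + 1 / (8 * (c + 1)) with ha
  have hρa : ρ < a := by rw [ha]; linarith [show 0 < 1 / (8 * (c + 1)) by positivity]
  have ha2 : a < 2 := by
    rw [ha]; linarith [show 1 / (8 * (c + 1)) ≤ 1 / 16 by gcongr; linarith]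
  have hFa : c < Ffun a := by
    have h : 1 / (8 * (a - ρ)) - 1 = c := by
      rw [ha, add_sub_cancel_left]
      field_simp
      ring
    exact h ▸ inv_sub_one_lt_Ffun hρa ha2
  have hFb : c < Ffun (4 * c + 4) := by
    linarith [quarter_add_one_lt_Ffun (show ρ < 4 * c + 4 by linarith)]
  exact exists_two_crossings_of_valley continuousOn_Ffun hanti hmono hρa (by linarith)
    (by linarith) hFa hFm hFb

lemma derivNum_pos_of_lt_Ffun {c u : ℝ} (hu : ρ < u) (h : c < Ffun u) : 0 < derivNum c u := by
  have huP := mul_Pfun_pos_of_root_lt hu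
  rw [derivNum_eq_mul (left_ne_zero_of_mul huP.ne') (right_ne_zero_of_mul huP.ne')]
  exact mul_pos (sub_pos.2 h) huP

lemma derivNum_neg_of_Ffun_lt {c u : ℝ} (hu : ρ < u) (h : Ffun u < c) : derivNum c u < 0 := by
  have huP := mul_Pfun_pos_of_root_lt hu
  rw [derivNum_eq_mul (left_ne_zero_of_mul huP.ne') (right_ne_zero_of_mul huP.ne')]
  exact mul_neg_of_neg_of_pos (sub_neg.2 h) huP

lemma derivNum_sign_pattern {c : ℝ} (hc : Fstar < c) :
    ∃ u1 u2, ρ < u1 ∧ u1 < u2 ∧ Ffun u1 = c ∧ Ffun u2 = c ∧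
      (∀ u, ρ < u → Ffun u = c → u = u1 ∨ u = u2) ∧
      (∀ u, 0 < u → u < u1 → 0 < derivNum c u) ∧
      (∀ u, u1 < u → u < u2 → derivNum c u < 0) ∧
      (∀ u, u2 < u → 0 < derivNum c u) := by
  obtain ⟨u1, u2, hρu1, hu12, hF1, hF2, huniq, hbelow, hbetween, habove⟩ := Ffun_level_set hc
  refine ⟨u1, u2, hρu1, hu12, hF1, hF2, huniq, fun u hu huu1 => ?_,
    fun u h1 h2 => derivNum_neg_of_Ffun_lt (hρu1.trans h1) (hbetween u h1 h2),
    fun u h2 => derivNum_pos_of_lt_Ffun (by linarith) (habove u h2)⟩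
  by_cases hρu : ρ < u
  · exact derivNum_pos_of_lt_Ffun hρu (hbelow u hρu huu1)
  · exact derivNum_pos_of_Pfun_nonpos (by linarith [one_le_Fstar]) hu
      (le_of_not_gt fun hP => hρu ((Pfun_pos_iff hu).1 hP))

lemma deriv_Ereward_three_pos {β δ θ : ℝ} (h : 0 < derivNum (-β * δ) (exp (β * (θ + δ)))) :
    0 < deriv (fun t => Ereward 3 β δ t) θ := by
  rw [(hasDerivAt_Ereward_three β δ θ).deriv]
  exact mul_pos (by positivity) h

lemma deriv_Ereward_three_neg {β δ θ : ℝ} (h : derivNum (-β * δ) (exp (β * (θ + δ))) < 0) :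
    deriv (fun t => Ereward 3 β δ t) θ < 0 := by
  rw [(hasDerivAt_Ereward_three β δ θ).deriv]
  exact mul_neg_of_pos_of_neg (by positivity) h

lemma lt_log_div_sub_iff {β δ θ w : ℝ} (hβ : 0 < β) (hw : 0 < w) :
    θ < log w / β - δ ↔ exp (β * (θ + δ)) < w := by
  rw [← lt_log_iff_exp_lt hw, lt_sub_iff_add_lt, lt_div_iff₀ hβ, mul_comm]

lemma log_div_sub_lt_iff {β δ θ w : ℝ} (hβ : 0 < β) (hw : 0 < w) :
    log w / β - δ < θ ↔ w < exp (β * (θ + δ)) := by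
  rw [← log_lt_iff_lt_exp hw, sub_lt_iff_lt_add, div_lt_iff₀ hβ, mul_comm]

/-- For N = 3, fixed β > 0 and δ ∈ ℝ, if −βδ > F*, then F(u) = −βδ has exactly
two solutions u₁ < u₂ in {u > 0 : P(u) > 0}, both greater than (1+√21)/4, and with
u = e^{β(θ+δ)}: E_r'(θ) > 0 if u < u₁, E_r'(θ) < 0 if u₁ < u < u₂, E_r'(θ) > 0 if u > u₂;
hence E_r is increasing for θ < θ₁, decreasing for θ₁ < θ < θ₂ and increasing for θ > θ₂,
where θ_k = (log u_k)/β − δ. -/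
theorem reward_N3_phase_transition_above_threshold (β δ : ℝ) (hβ : 0 < β)
    (h : Fstar < -β * δ) :
    ∃ u1 u2 : ℝ, u1 < u2 ∧
      (1 + Real.sqrt 21) / 4 < u1 ∧ (1 + Real.sqrt 21) / 4 < u2 ∧
      0 < u1 ∧ 0 < u2 ∧ 0 < Pfun u1 ∧ 0 < Pfun u2 ∧
      Ffun u1 = -β * δ ∧ Ffun u2 = -β * δ ∧
      (∀ u : ℝ, 0 < u → 0 < Pfun u → Ffun u = -β * δ → u = u1 ∨ u = u2) ∧
      (∀ θ : ℝ, Real.exp (β * (θ + δ)) < u1 →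
        0 < deriv (fun t : ℝ => Ereward 3 β δ t) θ) ∧
      (∀ θ : ℝ, u1 < Real.exp (β * (θ + δ)) → Real.exp (β * (θ + δ)) < u2 →
        deriv (fun t : ℝ => Ereward 3 β δ t) θ < 0) ∧
      (∀ θ : ℝ, u2 < Real.exp (β * (θ + δ)) →
        0 < deriv (fun t : ℝ => Ereward 3 β δ t) θ) ∧
      StrictMonoOn (fun t : ℝ => Ereward 3 β δ t) (Set.Iio (Real.log u1 / β - δ)) ∧
      StrictAntiOn (fun t : ℝ => Ereward 3 β δ t)
        (Set.Ioo (Real.log u1 / β - δ) (Real.log u2 / β - δ)) ∧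
      StrictMonoOn (fun t : ℝ => Ereward 3 β δ t) (Set.Ioi (Real.log u2 / β - δ)) := by
  obtain ⟨u1, u2, hρu1, hu12, hF1, hF2, huniq, hpos1, hneg, hpos2⟩ := derivNum_sign_pattern h
  have hu1 : 0 < u1 := by linarith [root_bounds.1]
  have hu2 : 0 < u2 := hu1.trans hu12
  have hcont : ContinuousOn (fun t => Ereward 3 β δ t) Set.univ :=
    fun θ _ => (hasDerivAt_Ereward_three β δ θ).continuousAt.continuousWithinAt
  refine ⟨u1, u2, hu12, hρu1, hρu1.trans hu12, hu1, hu2, (Pfun_pos_iff hu1).2 hρu1,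
    (Pfun_pos_iff hu2).2 (hρu1.trans hu12), hF1, hF2,
    fun u hu hP => huniq u ((Pfun_pos_iff hu).1 hP),
    fun θ hθ => deriv_Ereward_three_pos (hpos1 _ (exp_pos _) hθ),
    fun θ h1 h2 => deriv_Ereward_three_neg (hneg _ h1 h2),
    fun θ hθ => deriv_Ereward_three_pos (hpos2 _ hθ),
    strictMonoOn_of_deriv_pos (convex_Iio _) (hcont.mono (Set.subset_univ _)) fun θ hθ => ?_,
    strictAntiOn_of_deriv_neg (convex_Ioo _ _) (hcont.mono (Set.subset_univ _)) fun θ hθ => ?_,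
    strictMonoOn_of_deriv_pos (convex_Ioi _) (hcont.mono (Set.subset_univ _)) fun θ hθ => ?_⟩
  · rw [interior_Iio, Set.mem_Iio, lt_log_div_sub_iff hβ hu1] at hθ
    exact deriv_Ereward_three_pos (hpos1 _ (exp_pos _) hθ)
  · rw [interior_Ioo, Set.mem_Ioo, log_div_sub_lt_iff hβ hu1, lt_log_div_sub_iff hβ hu2] at hθ
    exact deriv_Ereward_three_neg (hneg _ hθ.1 hθ.2)
  · rw [interior_Ioi, Set.mem_Ioi, log_div_sub_lt_iff hβ hu2] at hθ
    exact deriv_Ereward_three_pos (hpos2 _ hθ)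
end
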